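/- Deterministic estimation oracle inequality for the sg-LASSO (deterministic core of Theorem 1, second claim). Under the same hypotheses as the deterministic prediction oracle inequality — y = m + u, λ > 0, c > 1, c₀ = (c+1)/(c−1), β ≠ 0 with support S₀ and group support 𝒢₀, β̂ a minimizer of ‖y − Xb‖_T² + 2λΩ(b), dual bound |⟨u, Xb⟩|/T ≤ (λ/c)Ω(b) for all b, restricted eigenvalue Δᵀ Σ Δ ≥ γ ∑_{G∈𝒢₀}|Δ_G|₂² for all Δ ∈ 𝒞(2c₀), and every entry of XᵀX/T − Σ at most γ/(2 G* s_α (1+2c₀)²) in absolute value — the sg-LASSO estimation error satisfies Ω(β̂ − β) ≤ √( 2(1+2c₀)² (C₁ s_α λ² + 4‖m − Xβ‖_T²) s_α / γ ) + (1 + 1/(2c₀)) · (4c / ((c−1)λ)) · ‖m − Xβ‖_T², where C₁ = 4A(1+c₀)²(1 + 1/c)²/γ and A = 2(1+2c₀)²/(2(1+2c₀)² − (1+c₀)²). -/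

import Mathlib

/-!
Write `Δ = β̂ - β`. Since `β` vanishes off `S₀` and off the groups outside `𝒢₀`, the penalty
splits as `Ω = Ω₀ + Ω₁` with `Ω(β) - Ω(β̂) ≤ Ω₀(Δ) - Ω₁(Δ)`; together with the minimality of `β̂`,
the dual bound and Cauchy–Schwarz this gives the basic inequality
`c‖XΔ‖_T² + 4λ(c-1)Ω₁(Δ) ≤ 4c‖m - Xβ‖_T² + 4λ(c+1)Ω₀(Δ)`.
If `λ(c+1)Ω₀(Δ) ≤ c‖m - Xβ‖_T²`, it bounds `Ω(Δ)` by the approximation error alone. Otherwise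
`Δ ∈ 𝒞(2c₀)`, and there `|Δ|₁² ≤ G*(1+2c₀)²s_α∑_{G∈𝒢₀}|Δ_G|₂²`, so replacing `Σ` by the
Gram matrix `XᵀX/T` costs at most half of the restricted eigenvalue: `γΩ₀(Δ)² ≤ 2s_α‖XΔ‖_T²`.
With the basic inequality this is a quadratic inequality in `Ω₀(Δ)`, and the basic inequality
once more gives `Ω₁(Δ) ≤ c₀Ω₀(Δ) + c‖m - Xβ‖_T²/((c-1)λ)`.
-/

open Finset

noncomputable section

open scoped Classical

/-- ℓ1 norm on ℝ^p. -/
def l1 {p : ℕ} (b : Fin p → ℝ) : ℝ := ∑ i, |b i|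

/-- ℓ2 norm on ℝ^p. -/
def l2 {p : ℕ} (b : Fin p → ℝ) : ℝ := Real.sqrt (∑ i, (b i) ^ 2)

/-- `restr b S` keeps the coordinates of `b` on `S` and puts zeros elsewhere. -/
def restr {p : ℕ} (b : Fin p → ℝ) (S : Finset (Fin p)) : Fin p → ℝ :=
  fun i => if i ∈ S then b i else 0

/-- `G` is a partition of `{1,…,p}` into nonempty pairwise disjoint groups. -/
def IsPartition {p : ℕ} (G : Finset (Finset (Fin p))) : Prop :=
  (∀ g ∈ G, g.Nonempty) ∧ (∀ g ∈ G, ∀ g' ∈ G, g ≠ g' → Disjoint g g') ∧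
    (∀ i : Fin p, ∃ g ∈ G, i ∈ g)

/-- The sg-LASSO penalty `Ω(b) = α|b|₁ + (1−α)∑_{G∈𝒢}|b_G|₂`. -/
def sgl {p : ℕ} (α : ℝ) (G : Finset (Finset (Fin p))) (b : Fin p → ℝ) : ℝ :=
  α * l1 b + (1 - α) * ∑ g ∈ G, l2 (restr b g)

/-- Support `S₀ = {j : β_j ≠ 0}` of `β`. -/
def supp {p : ℕ} (β : Fin p → ℝ) : Finset (Fin p) :=
  Finset.univ.filter (fun j => β j ≠ 0)

/-- Group support `𝒢₀ = {G ∈ 𝒢 : β_G ≠ 0}` of `β`. -/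
def gsupp {p : ℕ} (G : Finset (Finset (Fin p))) (β : Fin p → ℝ) :
    Finset (Finset (Fin p)) :=
  G.filter (fun g => restr β g ≠ 0)

/-- `Ω₀(b) = α|b_{S₀}|₁ + (1−α)∑_{G∈𝒢₀}|b_G|₂`. -/
def sgl0 {p : ℕ} (α : ℝ) (G : Finset (Finset (Fin p))) (β b : Fin p → ℝ) : ℝ :=
  α * l1 (restr b (supp β)) + (1 - α) * ∑ g ∈ gsupp G β, l2 (restr b g)

/-- `Ω₁(b) = α|b_{S₀ᶜ}|₁ + (1−α)∑_{G∈𝒢∖𝒢₀}|b_G|₂`. -/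
def sgl1 {p : ℕ} (α : ℝ) (G : Finset (Finset (Fin p))) (β b : Fin p → ℝ) : ℝ :=
  α * l1 (restr b (supp β)ᶜ) + (1 - α) * ∑ g ∈ G \ gsupp G β, l2 (restr b g)

/-- Effective sparsity constant `s_α`, defined via
`√(s_α) = α√|S₀| + (1−α)√|𝒢₀|`. -/
def salpha {p : ℕ} (α : ℝ) (G : Finset (Finset (Fin p))) (β : Fin p → ℝ) : ℝ :=
  (α * Real.sqrt ((supp β).card) + (1 - α) * Real.sqrt ((gsupp G β).card)) ^ 2

/-- Empirical squared norm `‖v‖_T² = |v|₂²/T`. -/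
def normT2 {T : ℕ} (v : Fin T → ℝ) : ℝ := (∑ t, (v t) ^ 2) / T

/-- Empirical norm `‖v‖_T = √(|v|₂²/T)`. -/
def normT {T : ℕ} (v : Fin T → ℝ) : ℝ := Real.sqrt ((∑ t, (v t) ^ 2) / T)

section Norms

variable {p : ℕ}

lemma l1_nonneg (b : Fin p → ℝ) : 0 ≤ l1 b := sum_nonneg fun _ _ => abs_nonneg _

lemma l2_nonneg (b : Fin p → ℝ) : 0 ≤ l2 b := Real.sqrt_nonneg _

lemma l2_eq_norm (b : Fin p → ℝ) :
    l2 b = ‖(WithLp.toLp 2 b : EuclideanSpace ℝ (Fin p))‖ := by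
  simp [l2, EuclideanSpace.norm_eq]

lemma l2_add_le (x y : Fin p → ℝ) : l2 (x + y) ≤ l2 x + l2 y := by
  simpa only [l2_eq_norm, WithLp.toLp_add] using norm_add_le _ _

lemma l1_neg (b : Fin p → ℝ) : l1 (-b) = l1 b := by simp [l1]

lemma l2_neg (b : Fin p → ℝ) : l2 (-b) = l2 b := by simp [l2]

lemma l2_le_l1 (b : Fin p → ℝ) : l2 b ≤ l1 b := by
  refine Real.sqrt_le_iff.2 ⟨l1_nonneg b, ?_⟩
  simpa only [l1, sq_abs] using sum_sq_le_sq_sum_of_nonneg (fun i _ => abs_nonneg (b i))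

lemma restr_add (x y : Fin p → ℝ) (S : Finset (Fin p)) :
    restr (x + y) S = restr x S + restr y S := by
  ext i; by_cases h : i ∈ S <;> simp [restr, h]

lemma restr_neg (b : Fin p → ℝ) (S : Finset (Fin p)) : restr (-b) S = -restr b S := by
  ext i; by_cases h : i ∈ S <;> simp [restr, h]

lemma restr_sub (x y : Fin p → ℝ) (S : Finset (Fin p)) :
    restr (x - y) S = restr x S - restr y S := by
  ext i; by_cases h : i ∈ S <;> simp [restr, h]

lemma sum_apply_restr (b : Fin p → ℝ) (S : Finset (Fin p)) {f : ℝ → ℝ} (hf : f 0 = 0) :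
    ∑ i, f (restr b S i) = ∑ i ∈ S, f (b i) := by
  simp only [restr, apply_ite f, hf]
  rw [sum_ite_mem, univ_inter]

lemma l1_restr (b : Fin p → ℝ) (S : Finset (Fin p)) : l1 (restr b S) = ∑ i ∈ S, |b i| :=
  sum_apply_restr b S abs_zero

lemma l2_restr (b : Fin p → ℝ) (S : Finset (Fin p)) :
    l2 (restr b S) = √(∑ i ∈ S, b i ^ 2) :=
  congrArg Real.sqrt (sum_apply_restr b S (zero_pow two_ne_zero))

lemma l2_restr_sq (b : Fin p → ℝ) (S : Finset (Fin p)) :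
    l2 (restr b S) ^ 2 = ∑ i ∈ S, b i ^ 2 := by
  rw [l2_restr, Real.sq_sqrt (sum_nonneg fun _ _ => sq_nonneg _)]

lemma l1_restr_le (b : Fin p → ℝ) (S : Finset (Fin p)) :
    l1 (restr b S) ≤ √(#S : ℝ) * l2 (restr b S) := by
  simpa [l1_restr, l2_restr] using Real.sum_mul_le_sqrt_mul_sqrt S (fun _ => 1) (fun i => |b i|)

end Norms

section Decomposition

variable {p : ℕ} {α : ℝ} {G : Finset (Finset (Fin p))} {β : Fin p → ℝ}

lemma restr_compl_supp_eq_zero : restr β (supp β)ᶜ = 0 := by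
  ext i; by_cases h : β i = 0 <;> simp [restr, supp, h]

lemma restr_eq_zero_of_mem_sdiff_gsupp {g : Finset (Fin p)} (hg : g ∈ G \ gsupp G β) :
    restr β g = 0 := by
  simp only [gsupp, mem_sdiff, mem_filter, not_and, not_not] at hg
  exact hg.2 hg.1

lemma sgl1_sub_self (b : Fin p → ℝ) : sgl1 α G β (b - β) = sgl1 α G β b := by
  unfold sgl1
  rw [restr_sub, restr_compl_supp_eq_zero, sub_zero]
  congr 2
  refine sum_congr rfl fun g hg => ?_
  rw [restr_sub, restr_eq_zero_of_mem_sdiff_gsupp hg, sub_zero]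

lemma sgl1_self : sgl1 α G β β = 0 := by
  rw [← sgl1_sub_self, sub_self]
  simp [sgl1, restr, l1, l2]

lemma sgl_eq_sgl0_add_sgl1 (b : Fin p → ℝ) : sgl α G b = sgl0 α G β b + sgl1 α G β b := by
  have hl1 : l1 b = l1 (restr b (supp β)) + l1 (restr b (supp β)ᶜ) := by
    rw [l1_restr, l1_restr, sum_add_sum_compl]; rfl
  have hl2 : ∑ g ∈ G, l2 (restr b g) =
      ∑ g ∈ gsupp G β, l2 (restr b g) + ∑ g ∈ G \ gsupp G β, l2 (restr b g) :=
    by rw [add_comm]; exact (sum_sdiff (filter_subset _ _)).symm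
  rw [sgl, sgl0, sgl1, hl1, hl2]
  ring

lemma sgl0_nonneg (hα0 : 0 ≤ α) (hα1 : α ≤ 1) (b : Fin p → ℝ) : 0 ≤ sgl0 α G β b := by
  have := sub_nonneg.2 hα1
  have := sum_nonneg fun g (_ : g ∈ gsupp G β) => l2_nonneg (restr b g)
  have := l1_nonneg (restr b (supp β))
  unfold sgl0; positivity

lemma sgl_nonneg (hα0 : 0 ≤ α) (hα1 : α ≤ 1) (b : Fin p → ℝ) : 0 ≤ sgl α G b := by
  have := sub_nonneg.2 hα1
  have := sum_nonneg fun g (_ : g ∈ G) => l2_nonneg (restr b g)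
  have := l1_nonneg b
  unfold sgl; positivity

lemma sgl1_nonneg (hα0 : 0 ≤ α) (hα1 : α ≤ 1) (b : Fin p → ℝ) : 0 ≤ sgl1 α G β b := by
  have := sub_nonneg.2 hα1
  have := sum_nonneg fun g (_ : g ∈ G \ gsupp G β) => l2_nonneg (restr b g)
  have := l1_nonneg (restr b (supp β)ᶜ)
  unfold sgl1; positivity

lemma sgl0_add_le (hα0 : 0 ≤ α) (hα1 : α ≤ 1) (x y : Fin p → ℝ) :
    sgl0 α G β (x + y) ≤ sgl0 α G β x + sgl0 α G β y := by
  have h1 : l1 (restr (x + y) (supp β)) ≤ l1 (restr x (supp β)) + l1 (restr y (supp β)) := by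
    simp only [restr_add, l1, Pi.add_apply, ← sum_add_distrib]
    exact sum_le_sum fun i _ => abs_add_le _ _
  have h2 : ∑ g ∈ gsupp G β, l2 (restr (x + y) g) ≤
      ∑ g ∈ gsupp G β, l2 (restr x g) + ∑ g ∈ gsupp G β, l2 (restr y g) := by
    rw [← sum_add_distrib]
    exact sum_le_sum fun g _ => by rw [restr_add]; exact l2_add_le _ _
  unfold sgl0
  nlinarith [mul_le_mul_of_nonneg_left h1 hα0, mul_le_mul_of_nonneg_left h2 (sub_nonneg.2 hα1)]

lemma sgl0_neg (b : Fin p → ℝ) : sgl0 α G β (-b) = sgl0 α G β b := by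
  simp only [sgl0, restr_neg, l1_neg, l2_neg]

lemma sgl_sub_sgl_le (hα0 : 0 ≤ α) (hα1 : α ≤ 1) (b : Fin p → ℝ) :
    sgl α G β - sgl α G b ≤ sgl0 α G β (b - β) - sgl1 α G β (b - β) := by
  have h : sgl0 α G β β ≤ sgl0 α G β b + sgl0 α G β (b - β) := by
    simpa only [← sub_eq_add_neg, sub_sub_cancel, sgl0_neg] using
      sgl0_add_le (G := G) (β := β) hα0 hα1 b (-(b - β))
  rw [sgl_eq_sgl0_add_sgl1 (β := β) β, sgl_eq_sgl0_add_sgl1 (β := β) b, sgl1_self, sgl1_sub_self]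
  linarith

end Decomposition

lemma salpha_nonneg {p : ℕ} {α : ℝ} {G : Finset (Finset (Fin p))} {β : Fin p → ℝ} :
    0 ≤ salpha α G β := sq_nonneg _

section Partition

variable {p : ℕ} {α : ℝ} {G : Finset (Finset (Fin p))} {β : Fin p → ℝ}

lemma IsPartition.pairwiseDisjoint (hG : IsPartition G) :
    (G : Set (Finset (Fin p))).PairwiseDisjoint id :=
  fun g hg g' hg' hne => hG.2.1 g hg g' hg' hne

lemma IsPartition.sum_eq_sum_sum (hG : IsPartition G) (f : Fin p → ℝ) :
    ∑ i, f i = ∑ g ∈ G, ∑ i ∈ g, f i := by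
  have huniv : (univ : Finset (Fin p)) = G.biUnion id := by
    ext i
    simpa using hG.2.2 i
  rw [huniv]
  exact sum_biUnion hG.pairwiseDisjoint

lemma IsPartition.sum_l2_restr_le_l1 (hG : IsPartition G) (b : Fin p → ℝ) :
    ∑ g ∈ G, l2 (restr b g) ≤ l1 b := by
  rw [l1, hG.sum_eq_sum_sum]
  exact sum_le_sum fun g _ => (l2_le_l1 _).trans_eq (l1_restr b g)

lemma IsPartition.sum_l2_restr_le_sgl (hG : IsPartition G) (hα0 : 0 ≤ α) (b : Fin p → ℝ) :
    ∑ g ∈ G, l2 (restr b g) ≤ sgl α G b := by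
  unfold sgl
  nlinarith [mul_le_mul_of_nonneg_left (hG.sum_l2_restr_le_l1 b) hα0]

lemma IsPartition.l1_le_sqrt_mul_sum_l2_restr (hG : IsPartition G) (b : Fin p → ℝ) :
    l1 b ≤ √(G.sup card : ℕ) * ∑ g ∈ G, l2 (restr b g) := by
  rw [l1, hG.sum_eq_sum_sum, mul_sum]
  refine sum_le_sum fun g hg => ?_
  rw [← l1_restr]
  refine (l1_restr_le b g).trans (mul_le_mul_of_nonneg_right ?_ (l2_nonneg _))
  exact Real.sqrt_le_sqrt (by exact_mod_cast le_sup hg)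

lemma IsPartition.l1_sq_le_mul_sgl_sq (hG : IsPartition G) (hα0 : 0 ≤ α) (b : Fin p → ℝ) :
    l1 b ^ 2 ≤ (G.sup card : ℕ) * sgl α G b ^ 2 := by
  have h : l1 b ≤ √(G.sup card : ℕ) * sgl α G b :=
    (hG.l1_le_sqrt_mul_sum_l2_restr b).trans
      (mul_le_mul_of_nonneg_left (hG.sum_l2_restr_le_sgl hα0 b) (Real.sqrt_nonneg _))
  calc l1 b ^ 2 ≤ (√(G.sup card : ℕ) * sgl α G b) ^ 2 := pow_le_pow_left₀ (l1_nonneg b) h 2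
    _ = _ := by rw [mul_pow, Real.sq_sqrt (Nat.cast_nonneg _)]

lemma IsPartition.sum_supp_sq_le (hG : IsPartition G) (b : Fin p → ℝ) :
    ∑ i ∈ supp β, b i ^ 2 ≤ ∑ g ∈ gsupp G β, l2 (restr b g) ^ 2 := by
  simp_rw [l2_restr_sq]
  refine (sum_le_sum_of_subset_of_nonneg (fun i hi => ?_) fun _ _ _ => sq_nonneg _).trans_eq
    (sum_biUnion (hG.pairwiseDisjoint.subset (coe_subset.2 (filter_subset _ _))))
  obtain ⟨g, hgG, hig⟩ := hG.2.2 i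
  refine mem_biUnion.2 ⟨g, mem_filter.2 ⟨hgG, fun h => ?_⟩, hig⟩
  have := congrFun h i
  simp only [restr, hig, if_true, Pi.zero_apply] at this
  simp [supp, this] at hi

lemma IsPartition.sgl0_sq_le_salpha_mul (hG : IsPartition G) (hα0 : 0 ≤ α) (hα1 : α ≤ 1)
    (b : Fin p → ℝ) :
    sgl0 α G β b ^ 2 ≤ salpha α G β * ∑ g ∈ gsupp G β, l2 (restr b g) ^ 2 := by
  set N := ∑ g ∈ gsupp G β, l2 (restr b g) ^ 2
  have hl1 : l1 (restr b (supp β)) ≤ √(#(supp β) : ℝ) * √N := by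
    refine (l1_restr_le b _).trans (mul_le_mul_of_nonneg_left ?_ (Real.sqrt_nonneg _))
    rw [l2_restr]
    exact Real.sqrt_le_sqrt (hG.sum_supp_sq_le b)
  have hl2 : ∑ g ∈ gsupp G β, l2 (restr b g) ≤ √(#(gsupp G β) : ℝ) * √N := by
    simpa using Real.sum_mul_le_sqrt_mul_sqrt (gsupp G β) (fun _ => 1) (fun g => l2 (restr b g))
  have h : sgl0 α G β b ≤
      (α * √(#(supp β) : ℝ) + (1 - α) * √(#(gsupp G β) : ℝ)) * √N := by
    unfold sgl0
    nlinarith [mul_le_mul_of_nonneg_left hl1 hα0, mul_le_mul_of_nonneg_left hl2 (sub_nonneg.2 hα1)]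
  calc sgl0 α G β b ^ 2
      ≤ ((α * √(#(supp β) : ℝ) + (1 - α) * √(#(gsupp G β) : ℝ)) * √N) ^ 2 :=
        pow_le_pow_left₀ (sgl0_nonneg hα0 hα1 b) h 2
    _ = salpha α G β * N := by
        rw [mul_pow, Real.sq_sqrt (sum_nonneg fun _ _ => sq_nonneg _)]
        rfl

end Partition

section QuadraticForm

variable {ι τ : Type*} [Fintype ι] [Fintype τ]

lemma sum_sum_mul_le_add_of_abs_sub_le {M N : Matrix ι ι ℝ} {ε : ℝ}
    (h : ∀ j k, |M j k - N j k| ≤ ε) (x : ι → ℝ) :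
    ∑ j, ∑ k, x j * N j k * x k ≤ ∑ j, ∑ k, x j * M j k * x k + ε * (∑ j, |x j|) ^ 2 := by
  have hpt : ∀ j k, x j * N j k * x k ≤ x j * M j k * x k + ε * (|x j| * |x k|) := by
    intro j k
    have : x j * (N j k - M j k) * x k ≤ |x j| * |x k| * ε :=
      calc _ ≤ |x j * (N j k - M j k) * x k| := le_abs_self _
        _ = |x j| * |x k| * |M j k - N j k| := by rw [abs_mul, abs_mul, abs_sub_comm]; ring
        _ ≤ _ := mul_le_mul_of_nonneg_left (h j k) (by positivity)
    linarith
  calc ∑ j, ∑ k, x j * N j k * x k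
      ≤ ∑ j, ∑ k, (x j * M j k * x k + ε * (|x j| * |x k|)) :=
        sum_le_sum fun j _ => sum_le_sum fun k _ => hpt j k
    _ = _ := by
        rw [sq, sum_mul_sum, mul_sum]
        simp only [sum_add_distrib, mul_sum]

lemma sum_sum_mul_gram_div (X : Matrix τ ι ℝ) (x : ι → ℝ) (T : ℝ) :
    ∑ j, ∑ k, x j * ((∑ t, X t j * X t k) / T) * x k = (∑ t, X.mulVec x t ^ 2) / T := by
  simp only [Matrix.mulVec, dotProduct, sq, sum_div, mul_sum, sum_mul]
  conv_lhs => enter [2, j]; rw [sum_comm]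
  conv_rhs => enter [2, t]; rw [sum_comm]
  rw [sum_comm]
  exact sum_congr rfl fun t _ => sum_congr rfl fun j _ => sum_congr rfl fun k _ => by ring

end QuadraticForm

section EmpiricalNorm

variable {T : ℕ}

lemma normT2_nonneg (v : Fin T → ℝ) : 0 ≤ normT2 v := by
  unfold normT2; positivity

lemma normT_sq (v : Fin T → ℝ) : normT v ^ 2 = normT2 v := Real.sq_sqrt (normT2_nonneg v)

lemma normT2_sub (a b : Fin T → ℝ) :
    normT2 (a - b) = normT2 a - 2 * ((∑ t, a t * b t) / T) + normT2 b := by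
  simp only [normT2, Pi.sub_apply, sub_sq, sum_add_distrib, sum_sub_distrib, mul_assoc, ← mul_sum]
  ring

lemma sum_mul_div_le_normT_mul_normT (a b : Fin T → ℝ) :
    (∑ t, a t * b t) / T ≤ normT a * normT b := by
  have hT : (0 : ℝ) ≤ T := Nat.cast_nonneg T
  rw [normT, normT, Real.sqrt_div' _ hT, Real.sqrt_div' _ hT, div_mul_div_comm,
    Real.mul_self_sqrt hT]
  exact div_le_div_of_nonneg_right (Real.sum_mul_le_sqrt_mul_sqrt _ _ _) hT

end EmpiricalNorm

section BasicInequality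

variable {p T : ℕ} {α : ℝ} {G : Finset (Finset (Fin p))} {X : Matrix (Fin T) (Fin p) ℝ}
  {m u : Fin T → ℝ} {β βhat : Fin p → ℝ} {lam c : ℝ}

lemma normT2_mulVec_sub_le_of_objective_le
    (hmin : normT2 (m + u - X.mulVec βhat) + 2 * lam * sgl α G βhat ≤
      normT2 (m + u - X.mulVec β) + 2 * lam * sgl α G β) :
    normT2 (X.mulVec (βhat - β)) ≤
      2 * ((∑ t, (m - X.mulVec β + u) t * X.mulVec (βhat - β) t) / T) +
        2 * lam * (sgl α G β - sgl α G βhat) := by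
  have h : m + u - X.mulVec βhat = m - X.mulVec β + u - X.mulVec (βhat - β) := by
    rw [Matrix.mulVec_sub]; abel
  rw [h, normT2_sub, show m + u - X.mulVec β = m - X.mulVec β + u by abel] at hmin
  linarith

theorem sgl_basic_inequality (hα0 : 0 ≤ α) (hα1 : α ≤ 1) (hlam : 0 ≤ lam) (hc : 0 < c)
    (hmin : normT2 (m + u - X.mulVec βhat) + 2 * lam * sgl α G βhat ≤
      normT2 (m + u - X.mulVec β) + 2 * lam * sgl α G β)
    (hdual : |∑ t, u t * X.mulVec (βhat - β) t| / T ≤ lam / c * sgl α G (βhat - β)) :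
    c * normT2 (X.mulVec (βhat - β)) + 4 * lam * (c - 1) * sgl1 α G β (βhat - β) ≤
      4 * c * normT (m - X.mulVec β) ^ 2 + 4 * lam * (c + 1) * sgl0 α G β (βhat - β) := by
  have hfit := normT2_mulVec_sub_le_of_objective_le hmin
  have hpen := mul_le_mul_of_nonneg_left (sgl_sub_sgl_le (G := G) (β := β) hα0 hα1 βhat)
    (by positivity : 0 ≤ 2 * lam)
  set v := m - X.mulVec β
  set e := X.mulVec (βhat - β)
  have hcross : (∑ t, (v + u) t * e t) / T = (∑ t, v t * e t) / T + (∑ t, u t * e t) / T := by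
    rw [← add_div, ← sum_add_distrib]
    simp only [Pi.add_apply, add_mul]
  have hve := sum_mul_div_le_normT_mul_normT v e
  have hue : (∑ t, u t * e t) / T ≤ lam / c * sgl α G (βhat - β) :=
    (div_le_div_of_nonneg_right (le_abs_self _) (Nat.cast_nonneg T)).trans hdual
  have hamgm : 2 * (normT v * normT e) ≤ normT2 e / 2 + 2 * normT v ^ 2 := by
    nlinarith [sq_nonneg (normT e - 2 * normT v), normT_sq e]
  have hhalf : normT2 e / 2 ≤ 2 * normT v ^ 2 + 2 * (lam / c * sgl α G (βhat - β)) +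
      2 * lam * (sgl0 α G β (βhat - β) - sgl1 α G β (βhat - β)) := by
    linarith
  have hr : c * (lam / c) = lam := mul_div_cancel₀ lam hc.ne'
  linear_combination (2 * c) * hhalf + 4 * sgl α G (βhat - β) * hr +
    4 * lam * sgl_eq_sgl0_add_sgl1 (β := β) (α := α) (G := G) (βhat - β)

end BasicInequality

lemma le_two_mul_of_basic_inequality {a2 h ω0 ω1 lam c c0 : ℝ} (hlam : 0 < lam) (hc : 1 < c)
    (hc0 : c0 = (c + 1) / (c - 1)) (ha2 : 0 ≤ a2)
    (hkey : c * a2 + 4 * lam * (c - 1) * ω1 ≤ 4 * c * h ^ 2 + 4 * lam * (c + 1) * ω0)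
    (hle : c * h ^ 2 ≤ lam * (c + 1) * ω0) : ω1 ≤ 2 * c0 * ω0 := by
  have hc1 : 0 < c - 1 := by linarith
  rw [hc0, mul_div_assoc', div_mul_eq_mul_div, le_div_iff₀ hc1]
  refine le_of_mul_le_mul_left ?_ (by positivity : 0 < 4 * lam)
  nlinarith

-- Also valid at `K = 0`, where `γ / 0 = 0`.
lemma div_two_mul_mul_le {γ K : ℝ} (hγ : 0 ≤ γ) (hK : 0 ≤ K) : γ / (2 * K) * K ≤ γ / 2 := by
  rcases hK.eq_or_lt with rfl | hK
  · simpa using div_nonneg hγ zero_le_two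
  · rw [div_mul_eq_mul_div, mul_div_mul_right _ _ hK.ne']

section RestrictedEigenvalue

variable {p T : ℕ} {α γ c0 : ℝ} {G : Finset (Finset (Fin p))} {β Δ : Fin p → ℝ}
  {X : Matrix (Fin T) (Fin p) ℝ} {Sig : Matrix (Fin p) (Fin p) ℝ}

lemma IsPartition.mul_sum_l2_restr_sq_le_two_mul_normT2 (hG : IsPartition G) (hα0 : 0 ≤ α)
    (hα1 : α ≤ 1) (hγ : 0 ≤ γ) (hc0 : 0 ≤ c0) (hcone : sgl1 α G β Δ ≤ 2 * c0 * sgl0 α G β Δ)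
    (hRE : γ * ∑ g ∈ gsupp G β, l2 (restr Δ g) ^ 2 ≤ ∑ j, ∑ k, Δ j * Sig j k * Δ k)
    (hconc : ∀ j k, |(∑ t, X t j * X t k) / T - Sig j k| ≤
      γ / (2 * ((G.sup card : ℕ) : ℝ) * salpha α G β * (1 + 2 * c0) ^ 2)) :
    γ * ∑ g ∈ gsupp G β, l2 (restr Δ g) ^ 2 ≤ 2 * normT2 (X.mulVec Δ) := by
  set N := ∑ g ∈ gsupp G β, l2 (restr Δ g) ^ 2
  set K := ((G.sup card : ℕ) : ℝ) * salpha α G β * (1 + 2 * c0) ^ 2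
  have hK : 0 ≤ K := mul_nonneg (mul_nonneg (Nat.cast_nonneg _) salpha_nonneg) (sq_nonneg _)
  have hquad := sum_sum_mul_le_add_of_abs_sub_le hconc Δ
  rw [sum_sum_mul_gram_div, show 2 * ((G.sup card : ℕ) : ℝ) * salpha α G β * (1 + 2 * c0) ^ 2 =
    2 * K by ring] at hquad
  have hsgl : sgl α G Δ ≤ (1 + 2 * c0) * sgl0 α G β Δ := by
    rw [sgl_eq_sgl0_add_sgl1 (β := β)]; linarith
  have hl1 : l1 Δ ^ 2 ≤ K * N :=
    calc l1 Δ ^ 2 ≤ (G.sup card : ℕ) * sgl α G Δ ^ 2 := hG.l1_sq_le_mul_sgl_sq hα0 Δ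
      _ ≤ (G.sup card : ℕ) * ((1 + 2 * c0) ^ 2 * sgl0 α G β Δ ^ 2) := by
          rw [← mul_pow]
          gcongr
          exact sgl_nonneg hα0 hα1 Δ
      _ ≤ (G.sup card : ℕ) * ((1 + 2 * c0) ^ 2 * (salpha α G β * N)) := by
          gcongr
          exact hG.sgl0_sq_le_salpha_mul hα0 hα1 Δ
      _ = K * N := by ring
  have hε : γ / (2 * K) * l1 Δ ^ 2 ≤ γ / 2 * N :=
    calc _ ≤ γ / (2 * K) * K * N := by
          rw [mul_assoc]
          exact mul_le_mul_of_nonneg_left hl1 (div_nonneg hγ (by positivity))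
      _ ≤ γ / 2 * N := by gcongr; exact div_two_mul_mul_le hγ hK
  unfold normT2
  unfold l1 at hε
  linarith

lemma IsPartition.mul_sgl0_sq_le_of_cone (hG : IsPartition G) (hα0 : 0 ≤ α) (hα1 : α ≤ 1)
    (hγ : 0 ≤ γ) (hc0 : 0 ≤ c0) (hcone : sgl1 α G β Δ ≤ 2 * c0 * sgl0 α G β Δ)
    (hRE : γ * ∑ g ∈ gsupp G β, l2 (restr Δ g) ^ 2 ≤ ∑ j, ∑ k, Δ j * Sig j k * Δ k)
    (hconc : ∀ j k, |(∑ t, X t j * X t k) / T - Sig j k| ≤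
      γ / (2 * ((G.sup card : ℕ) : ℝ) * salpha α G β * (1 + 2 * c0) ^ 2)) :
    γ * sgl0 α G β Δ ^ 2 ≤ 2 * salpha α G β * normT2 (X.mulVec Δ) :=
  calc γ * sgl0 α G β Δ ^ 2
      ≤ γ * (salpha α G β * ∑ g ∈ gsupp G β, l2 (restr Δ g) ^ 2) :=
        mul_le_mul_of_nonneg_left (hG.sgl0_sq_le_salpha_mul hα0 hα1 _) hγ
    _ = salpha α G β * (γ * ∑ g ∈ gsupp G β, l2 (restr Δ g) ^ 2) := by ring
    _ ≤ salpha α G β * (2 * normT2 (X.mulVec Δ)) :=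
        mul_le_mul_of_nonneg_left
          (hG.mul_sum_l2_restr_sq_le_two_mul_normT2 hα0 hα1 hγ hc0 hcone hRE hconc) salpha_nonneg
    _ = 2 * salpha α G β * normT2 (X.mulVec Δ) := by ring

end RestrictedEigenvalue

lemma sq_le_of_mul_sq_le_add_mul {γ x B D : ℝ} (hγ : 0 < γ) (h : γ * x ^ 2 ≤ B + D * x) :
    γ ^ 2 * x ^ 2 ≤ D ^ 2 + 2 * γ * B := by
  nlinarith [sq_nonneg (γ * x - D), mul_le_mul_of_nonneg_left h hγ.le]

lemma eight_le_div_mul_sq {c0 : ℝ} (hc0 : 1 ≤ c0) :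
    8 ≤ 2 * (1 + 2 * c0) ^ 2 / (2 * (1 + 2 * c0) ^ 2 - (1 + c0) ^ 2) * (1 + 2 * c0) ^ 2 := by
  have hden : 0 < 2 * (1 + 2 * c0) ^ 2 - (1 + c0) ^ 2 := by nlinarith
  rw [div_mul_eq_mul_div, le_div_iff₀ hden]
  nlinarith [sq_nonneg (c0 - 1), sq_nonneg (c0 ^ 2 - 1)]

section OracleAlgebra

variable {a2 h ω0 ω1 lam c c0 γ s A C1 : ℝ}

lemma add_le_of_basic_inequality_of_le (hlam : 0 < lam) (hc : 1 < c)
    (hc0 : c0 = (c + 1) / (c - 1)) (ha2 : 0 ≤ a2)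
    (hkey : c * a2 + 4 * lam * (c - 1) * ω1 ≤ 4 * c * h ^ 2 + 4 * lam * (c + 1) * ω0)
    (hle : lam * (c + 1) * ω0 ≤ c * h ^ 2) :
    ω0 + ω1 ≤ (1 + 1 / (2 * c0)) * (4 * c / ((c - 1) * lam)) * h ^ 2 := by
  have hc1 : 0 < c - 1 := by linarith
  have hsplit : (1 + 1 / (2 * c0)) * (4 * c / ((c - 1) * lam)) * h ^ 2 =
      4 * c * h ^ 2 / ((c - 1) * lam) + 2 * c * h ^ 2 / ((c + 1) * lam) := by
    rw [hc0]; field_simp; ring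
  have hω0 : ω0 ≤ 2 * c * h ^ 2 / ((c + 1) * lam) := by
    rw [le_div_iff₀ (by positivity)]; nlinarith [sq_nonneg h]
  have hω1 : ω1 ≤ 4 * c * h ^ 2 / ((c - 1) * lam) := by
    rw [le_div_iff₀ (by positivity)]; nlinarith [sq_nonneg h]
  linarith

lemma le_mul_add_div_of_basic_inequality (hlam : 0 < lam) (hc : 1 < c)
    (hc0 : c0 = (c + 1) / (c - 1)) (ha2 : 0 ≤ a2)
    (hkey : c * a2 + 4 * lam * (c - 1) * ω1 ≤ 4 * c * h ^ 2 + 4 * lam * (c + 1) * ω0) :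
    ω1 ≤ c0 * ω0 + c * h ^ 2 / ((c - 1) * lam) := by
  have hc1 : 0 < c - 1 := by linarith
  rw [hc0, ← sub_le_iff_le_add', le_div_iff₀ (by positivity)]
  have : (c + 1) / (c - 1) * ω0 * ((c - 1) * lam) = lam * (c + 1) * ω0 := by field_simp
  nlinarith

lemma one_add_mul_le_sqrt_of_basic_inequality (hc : 1 < c) (hc0 : c0 = (c + 1) / (c - 1))
    (hγ : 0 < γ) (hs : 0 ≤ s)
    (hA : A = 2 * (1 + 2 * c0) ^ 2 / (2 * (1 + 2 * c0) ^ 2 - (1 + c0) ^ 2))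
    (hC1 : C1 = 4 * A * (1 + c0) ^ 2 * (1 + 1 / c) ^ 2 / γ)
    (hkey : c * a2 ≤ 4 * c * h ^ 2 + 4 * lam * (c + 1) * ω0) (hRE : γ * ω0 ^ 2 ≤ 2 * s * a2) :
    (1 + c0) * ω0 ≤ √(2 * (1 + 2 * c0) ^ 2 * (C1 * s * lam ^ 2 + 4 * h ^ 2) * s / γ) := by
  have hc0' : 1 ≤ c0 := by rw [hc0, le_div_iff₀ (by linarith)]; linarith
  -- `A` and `C₁` enter only through `8 ≤ A(1+2c₀)²` and `2(1+c₀)² ≤ (1+2c₀)²`.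
  have hA8 : 8 ≤ A * (1 + 2 * c0) ^ 2 := hA ▸ eight_le_div_mul_sq hc0'
  have ha2 : a2 ≤ 4 * h ^ 2 + 4 * (lam * (1 + 1 / c)) * ω0 := by
    rw [← mul_le_mul_iff_of_pos_left (by linarith : 0 < c)]
    have : c * (4 * h ^ 2 + 4 * (lam * (1 + 1 / c)) * ω0) =
        4 * c * h ^ 2 + 4 * lam * (c + 1) * ω0 := by field_simp
    linarith
  have hquad : γ * ω0 ^ 2 ≤ 8 * s * h ^ 2 + 8 * s * (lam * (1 + 1 / c)) * ω0 := by
    nlinarith [mul_le_mul_of_nonneg_left ha2 (by positivity : 0 ≤ 2 * s)]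
  have hsq := sq_le_of_mul_sq_le_add_mul hγ hquad
  refine Real.le_sqrt_of_sq_le (le_of_mul_le_mul_left ?_ (by positivity : 0 < γ ^ 2))
  have hrhs : γ ^ 2 * (2 * (1 + 2 * c0) ^ 2 * (C1 * s * lam ^ 2 + 4 * h ^ 2) * s / γ) =
      8 * (A * (1 + 2 * c0) ^ 2) * ((1 + c0) * (s * (lam * (1 + 1 / c)))) ^ 2 +
        8 * (1 + 2 * c0) ^ 2 * (γ * s * h ^ 2) := by
    rw [hC1]; field_simp; ring
  have h2 : 2 * (1 + c0) ^ 2 ≤ (1 + 2 * c0) ^ 2 := by nlinarith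
  rw [hrhs]
  nlinarith [mul_le_mul_of_nonneg_left hsq (sq_nonneg (1 + c0)),
    mul_le_mul_of_nonneg_right hA8 (sq_nonneg ((1 + c0) * (s * (lam * (1 + 1 / c))))),
    mul_le_mul_of_nonneg_right h2 (by positivity : 0 ≤ γ * s * h ^ 2)]

theorem add_le_of_basic_inequality (hlam : 0 < lam) (hc : 1 < c)
    (hc0 : c0 = (c + 1) / (c - 1)) (hγ : 0 < γ) (hs : 0 ≤ s) (hω1 : 0 ≤ ω1) (ha2 : 0 ≤ a2)
    (hA : A = 2 * (1 + 2 * c0) ^ 2 / (2 * (1 + 2 * c0) ^ 2 - (1 + c0) ^ 2))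
    (hC1 : C1 = 4 * A * (1 + c0) ^ 2 * (1 + 1 / c) ^ 2 / γ)
    (hkey : c * a2 + 4 * lam * (c - 1) * ω1 ≤ 4 * c * h ^ 2 + 4 * lam * (c + 1) * ω0)
    (hRE : c * h ^ 2 < lam * (c + 1) * ω0 → γ * ω0 ^ 2 ≤ 2 * s * a2) :
    ω0 + ω1 ≤ √(2 * (1 + 2 * c0) ^ 2 * (C1 * s * lam ^ 2 + 4 * h ^ 2) * s / γ) +
      (1 + 1 / (2 * c0)) * (4 * c / ((c - 1) * lam)) * h ^ 2 := by
  rcases le_or_gt (lam * (c + 1) * ω0) (c * h ^ 2) with hle | hlt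
  · linarith [add_le_of_basic_inequality_of_le hlam hc hc0 ha2 hkey hle,
      Real.sqrt_nonneg (2 * (1 + 2 * c0) ^ 2 * (C1 * s * lam ^ 2 + 4 * h ^ 2) * s / γ)]
  · have hkey' : c * a2 ≤ 4 * c * h ^ 2 + 4 * lam * (c + 1) * ω0 := by
      nlinarith [mul_nonneg (mul_nonneg hlam.le (sub_nonneg.2 hc.le)) hω1]
    have hω1le := le_mul_add_div_of_basic_inequality hlam hc hc0 ha2 hkey
    have hω0le := one_add_mul_le_sqrt_of_basic_inequality hc hc0 hγ hs hA hC1 hkey' (hRE hlt)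
    have hrem : c * h ^ 2 / ((c - 1) * lam) ≤
        (1 + 1 / (2 * c0)) * (4 * c / ((c - 1) * lam)) * h ^ 2 := by
      have hc0pos : 0 ≤ c0 := by rw [hc0]; exact div_nonneg (by linarith) (by linarith)
      have hq : 0 ≤ c * h ^ 2 / ((c - 1) * lam) :=
        div_nonneg (by positivity) (mul_nonneg (by linarith) hlam.le)
      rw [show (1 + 1 / (2 * c0)) * (4 * c / ((c - 1) * lam)) * h ^ 2 =
        (4 + 2 / c0) * (c * h ^ 2 / ((c - 1) * lam)) by ring]
      nlinarith [mul_nonneg (div_nonneg zero_le_two hc0pos) hq]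
    linarith

end OracleAlgebra

theorem sgLasso_estimation_oracle_general
    (p T : ℕ)
    (α : ℝ) (hα0 : 0 ≤ α) (hα1 : α ≤ 1)
    (G : Finset (Finset (Fin p))) (hG : IsPartition G)
    (X : Matrix (Fin T) (Fin p) ℝ) (m u : Fin T → ℝ)
    (lam c c0 : ℝ) (hlam : 0 < lam) (hc : 1 < c) (hc0 : c0 = (c + 1) / (c - 1))
    (β : Fin p → ℝ) (βhat : Fin p → ℝ)
    (hmin : ∀ b : Fin p → ℝ,
      normT2 (m + u - X.mulVec βhat) + 2 * lam * sgl α G βhat ≤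
        normT2 (m + u - X.mulVec b) + 2 * lam * sgl α G b)
    (hdual : ∀ b : Fin p → ℝ,
      |∑ t, u t * X.mulVec b t| / T ≤ (lam / c) * sgl α G b)
    (Sig : Matrix (Fin p) (Fin p) ℝ)
    (γ : ℝ) (hγ : 0 < γ)
    (hRE : ∀ Δ : Fin p → ℝ, sgl1 α G β Δ ≤ (2 * c0) * sgl0 α G β Δ →
      γ * ∑ g ∈ gsupp G β, (l2 (restr Δ g)) ^ 2 ≤ ∑ j, ∑ k, Δ j * Sig j k * Δ k)
    (hconc : ∀ j k, |(∑ t, X t j * X t k) / T - Sig j k| ≤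
      γ / (2 * ((G.sup Finset.card : ℕ) : ℝ) * salpha α G β * (1 + 2 * c0) ^ 2))
    (A C1 : ℝ)
    (hA : A = 2 * (1 + 2 * c0) ^ 2 / (2 * (1 + 2 * c0) ^ 2 - (1 + c0) ^ 2))
    (hC1 : C1 = 4 * A * (1 + c0) ^ 2 * (1 + 1 / c) ^ 2 / γ) :
    sgl α G (βhat - β) ≤
      Real.sqrt (2 * (1 + 2 * c0) ^ 2 *
          (C1 * salpha α G β * lam ^ 2 + 4 * normT (m - X.mulVec β) ^ 2) *
            salpha α G β / γ) +
        (1 + 1 / (2 * c0)) * (4 * c / ((c - 1) * lam)) *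
          normT (m - X.mulVec β) ^ 2 := by
  have hkey := sgl_basic_inequality hα0 hα1 hlam.le (by linarith) (hmin β) (hdual (βhat - β))
  rw [sgl_eq_sgl0_add_sgl1 (β := β)]
  refine add_le_of_basic_inequality hlam hc hc0 hγ salpha_nonneg (sgl1_nonneg hα0 hα1 _)
    (normT2_nonneg _) hA hC1 hkey fun hlt => ?_
  have hc0_nonneg : 0 ≤ c0 := hc0 ▸ div_nonneg (by linarith) (by linarith)
  have hcone := le_two_mul_of_basic_inequality hlam hc hc0 (normT2_nonneg _) hkey hlt.le
  exact hG.mul_sgl0_sq_le_of_cone hα0 hα1 hγ.le hc0_nonneg hcone (hRE _ hcone) hconc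

/-- deterministic estimation oracle inequality for the sg-LASSO
(deterministic core of Theorem 1, second claim):
`Ω(β̂ − β) ≤ √(2(1+2c₀)²(C₁s_αλ² + 4‖m−Xβ‖_T²)s_α/γ)
  + (1 + 1/(2c₀))·(4c/((c−1)λ))·‖m−Xβ‖_T²`,
with `C₁ = 4A(1+c₀)²(1+1/c)²/γ` and `A = 2(1+2c₀)²/(2(1+2c₀)² − (1+c₀)²)`. -/
theorem sgLasso_estimation_oracle
    (p T : ℕ) (hp : 1 ≤ p) (hT : 1 ≤ T)
    (α : ℝ) (hα0 : 0 ≤ α) (hα1 : α ≤ 1)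
    (G : Finset (Finset (Fin p))) (hG : IsPartition G)
    (X : Matrix (Fin T) (Fin p) ℝ) (m u : Fin T → ℝ)
    (lam c c0 : ℝ) (hlam : 0 < lam) (hc : 1 < c) (hc0 : c0 = (c + 1) / (c - 1))
    (β : Fin p → ℝ) (hβ : β ≠ 0) (βhat : Fin p → ℝ)
    (hmin : ∀ b : Fin p → ℝ,
      normT2 (m + u - X.mulVec βhat) + 2 * lam * sgl α G βhat ≤
        normT2 (m + u - X.mulVec b) + 2 * lam * sgl α G b)
    (hdual : ∀ b : Fin p → ℝ,
      |∑ t, u t * X.mulVec b t| / T ≤ (lam / c) * sgl α G b)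
    (Sig : Matrix (Fin p) (Fin p) ℝ) (hsym : ∀ j k, Sig j k = Sig k j)
    (γ : ℝ) (hγ : 0 < γ)
    (hRE : ∀ Δ : Fin p → ℝ, sgl1 α G β Δ ≤ (2 * c0) * sgl0 α G β Δ →
      γ * ∑ g ∈ gsupp G β, (l2 (restr Δ g)) ^ 2 ≤ ∑ j, ∑ k, Δ j * Sig j k * Δ k)
    (hconc : ∀ j k, |(∑ t, X t j * X t k) / T - Sig j k| ≤
      γ / (2 * ((G.sup Finset.card : ℕ) : ℝ) * salpha α G β * (1 + 2 * c0) ^ 2))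
    (A C1 : ℝ)
    (hA : A = 2 * (1 + 2 * c0) ^ 2 / (2 * (1 + 2 * c0) ^ 2 - (1 + c0) ^ 2))
    (hC1 : C1 = 4 * A * (1 + c0) ^ 2 * (1 + 1 / c) ^ 2 / γ) :
    sgl α G (βhat - β) ≤
      Real.sqrt (2 * (1 + 2 * c0) ^ 2 *
          (C1 * salpha α G β * lam ^ 2 + 4 * normT (m - X.mulVec β) ^ 2) *
            salpha α G β / γ) +
        (1 + 1 / (2 * c0)) * (4 * c / ((c - 1) * lam)) *
          normT (m - X.mulVec β) ^ 2 :=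
  sgLasso_estimation_oracle_general p T α hα0 hα1 G hG X m u lam c c0 hlam hc hc0 β βhat hmin hdual
    Sig γ hγ hRE hconc A C1 hA hC1
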